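/- For the 4-chord Gauss diagram of Example 4.3, all four chords are odd, the odd writhe J(K) is 0, and the odd writhe polynomial is f_K(t) = t⁴ − 2t² + 1; hence Deg f_K = 4 and the real crossing number of this virtual knot is exactly 4, even though |J(K)| = 0. -/

import Mathlib

open Finset LaurentPolynomial

/-- A signed, oriented chord diagram (combinatorial Gauss diagram) with `n` chords:
the `2*n` chord endpoints on the circle are the elements of `Fin (2*n)` in (positive)
cyclic order; chord `i` has over endpoint `c⁺ = ep (i, true)`, under endpoint
`c⁻ = ep (i, false)` and a sign (writhe) `sign i ∈ {1, -1}`. -/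
structure ChordDiagram (n : ℕ) where
  ep : Fin n × Bool ≃ Fin (2 * n)
  sign : Fin n → ℤ
  sign_unit : ∀ i, sign i = 1 ∨ sign i = -1

namespace ChordDiagram

variable {n : ℕ}

/-- the over endpoint `c⁺` of a chord -/
def overEnd (D : ChordDiagram n) (i : Fin n) : Fin (2 * n) := D.ep (i, true)

/-- the under endpoint `c⁻` of a chord -/
def under (D : ChordDiagram n) (i : Fin n) : Fin (2 * n) := D.ep (i, false)

/-- the number of steps from `b` to `x`, travelling in the positive direction
around the circle -/
def relpos (b x : Fin (2 * n)) : ℕ := (x.val + 2 * n - b.val) % (2 * n)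

/-- `x` lies strictly between the endpoints of chord `i`, on the side swept out
going from `c⁺` to `c⁻` in the positive direction -/
def StrictlyBetween (D : ChordDiagram n) (i : Fin n) (x : Fin (2 * n)) : Prop :=
  0 < relpos (D.overEnd i) x ∧ relpos (D.overEnd i) x < relpos (D.overEnd i) (D.under i)

instance (D : ChordDiagram n) (i : Fin n) (x : Fin (2 * n)) :
    Decidable (D.StrictlyBetween i x) := inferInstanceAs (Decidable (_ ∧ _))

/-- two distinct chords interlink if their endpoints alternate around the circle,
i.e. exactly one endpoint of `j` lies strictly between the endpoints of `i` -/
def Interlinks (D : ChordDiagram n) (i j : Fin n) : Prop :=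
  i ≠ j ∧ Xor (D.StrictlyBetween i (D.overEnd j)) (D.StrictlyBetween i (D.under j))

instance (D : ChordDiagram n) (i j : Fin n) : Decidable (D.Interlinks i j) :=
  inferInstanceAs (Decidable (_ ∧ _))

/-- the number of chords interlinking chord `i` -/
def interlinkCount (D : ChordDiagram n) (i : Fin n) : ℕ :=
  (univ.filter fun j => D.Interlinks i j).card

/-- the number of chord endpoints lying (strictly) on one side of chord `i` -/
def sideCount (D : ChordDiagram n) (i : Fin n) : ℕ :=
  (univ.filter fun x => D.StrictlyBetween i x).card

/-- a chord is odd if it interlinks an odd number of other chords -/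
def OddChord (D : ChordDiagram n) (i : Fin n) : Prop := Odd (D.interlinkCount i)

instance (D : ChordDiagram n) (i : Fin n) : Decidable (D.OddChord i) :=
  inferInstanceAs (Decidable (Odd _))

/-- The label `N(a)` of the arc whose terminal point is `a`: the sum of the signs of
all chords whose over endpoint is met strictly before their under endpoint when
traversing the circle once in the positive direction starting inside this arc. -/
def arcLabel (D : ChordDiagram n) (a : Fin (2 * n)) : ℤ :=
  ∑ i ∈ univ.filter fun i => relpos a (D.overEnd i) < relpos a (D.under i), D.sign i

/-- The value `N(c)` of a chord: for a positive chord, the difference `x - y` of the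
arc labels just before `c⁺` and just before `c⁻`; for a negative chord, the difference
`z - w` of the arc labels just after `c⁺` and just after `c⁻` (the label just after an
over endpoint is the label just before it minus the sign, and the label just after an
under endpoint is the label just before it plus the sign). -/
def chordVal (D : ChordDiagram n) (i : Fin n) : ℤ :=
  if D.sign i = 1 then D.arcLabel (D.overEnd i) - D.arcLabel (D.under i)
  else (D.arcLabel (D.overEnd i) - D.sign i) - (D.arcLabel (D.under i) + D.sign i)

/-- the odd writhe `J(K) = Σ_{c odd} w(c)` -/
def oddWrithe (D : ChordDiagram n) : ℤ :=
  ∑ i ∈ univ.filter fun i => D.OddChord i, D.sign i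

/-- the odd writhe polynomial `f_K(t) = Σ_{c odd} w(c) · t^{N(c)} ∈ ℤ[t,t⁻¹]` -/
noncomputable def owp (D : ChordDiagram n) : LaurentPolynomial ℤ :=
  ∑ i ∈ univ.filter fun i => D.OddChord i, C (D.sign i) * T (D.chordVal i)

/-- evaluation of the odd writhe polynomial at a rational number `x`:
`Σ_{c odd} w(c) · x^{N(c)}` -/
def owpEval (D : ChordDiagram n) (x : ℚ) : ℚ :=
  ∑ i ∈ univ.filter fun i => D.OddChord i, (D.sign i : ℚ) * x ^ D.chordVal i

/-- the coefficient of `t^k` in a Laurent polynomial -/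
def coeffOf (f : LaurentPolynomial ℤ) (k : ℤ) : ℤ := f.coeff k

/-- the degree `Deg f = max { |i| : coefficient of tⁱ in f is nonzero }` -/
def owpDeg (f : LaurentPolynomial ℤ) : ℕ := f.coeff.support.sup fun k => k.natAbs

/-- reversing the orientation of the knot: the cyclic order of the endpoints is
reversed, while signs and over/under data of the crossings are preserved -/
def reverse (D : ChordDiagram n) : ChordDiagram n where
  ep := D.ep.trans Fin.revPerm
  sign := D.sign
  sign_unit := D.sign_unit

/-- the mirror image: every crossing is switched, so every chord's over and under
endpoints are exchanged and its sign is negated -/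
def mirror (D : ChordDiagram n) : ChordDiagram n where
  ep := (Equiv.prodCongr (Equiv.refl (Fin n))
      ⟨fun b => !b, fun b => !b, Bool.not_not, Bool.not_not⟩).trans D.ep
  sign := fun i => -D.sign i
  sign_unit := fun i => (D.sign_unit i).elim
    (fun h => Or.inr (show -D.sign i = -1 by rw [h]))
    (fun h => Or.inl (show -D.sign i = 1 by rw [h]; ring))

/-! ### Planarity via the Euler characteristic of the carrier surface

The diagram determines a 4-valent graph (vertices = chords, edges = the `2*n` arcs of
the circle) together with a rotation system at each vertex, coming from the structure
of a transversal crossing: for a positive crossing the counterclockwise order of the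
four ends is (over-out, under-out, over-in, under-in), for a negative crossing it is
(over-out, under-in, over-in, under-out).  The diagram is realizable by a classical
(planar) knot diagram iff the resulting closed oriented carrier surface is a sphere,
i.e. iff `V - E + F = n - 2n + F = 2`.

Darts are encoded as pairs `(p, io) : Fin (2*n) × Bool`, meaning the end of an arc
at the vertex through the circle point `p`, with `io = true` for the outgoing arc
(from `p` to `p+1`) and `io = false` for the incoming arc (from `p-1` to `p`). -/

/-- the other endpoint of the chord through a given endpoint -/
def otherEnd (D : ChordDiagram n) (p : Fin (2 * n)) : Fin (2 * n) :=
  D.ep ((D.ep.symm p).1, !(D.ep.symm p).2)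

lemma otherEnd_otherEnd (D : ChordDiagram n) (p : Fin (2 * n)) :
    D.otherEnd (D.otherEnd p) = p := by
  simp [otherEnd]

/-- whether the rotation at the vertex toggles the in/out marker when passing from
the end at `p` to the end at the other endpoint of its chord -/
def tog (D : ChordDiagram n) (p : Fin (2 * n)) : Bool :=
  if D.sign (D.ep.symm p).1 = 1 then !(D.ep.symm p).2 else (D.ep.symm p).2

/-- the vertex rotation permutation on darts -/
def vertexPerm (D : ChordDiagram n) : Equiv.Perm (Fin (2 * n) × Bool) :=
  Equiv.trans
    ⟨fun x => (x.1, xor x.2 (D.tog x.1)), fun x => (x.1, xor x.2 (D.tog x.1)),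
      fun x => by simp [Bool.xor_assoc], fun x => by simp [Bool.xor_assoc]⟩
    ⟨fun x => (D.otherEnd x.1, x.2), fun x => (D.otherEnd x.1, x.2),
      fun x => by simp [otherEnd_otherEnd], fun x => by simp [otherEnd_otherEnd]⟩

/-- the edge involution on darts, matching the two ends of each arc -/
def arcPerm (D : ChordDiagram n) : Equiv.Perm (Fin (2 * n) × Bool) :=
  ⟨fun x => if x.2 then (finRotate (2 * n) x.1, false) else ((finRotate (2 * n)).symm x.1, true),
   fun x => if x.2 then (finRotate (2 * n) x.1, false) else ((finRotate (2 * n)).symm x.1, true),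
   fun x => by rcases x with ⟨p, _ | _⟩ <;> simp only [Bool.false_eq_true, if_true, if_false, Equiv.apply_symm_apply, Equiv.symm_apply_apply],
   fun x => by rcases x with ⟨p, _ | _⟩ <;> simp only [Bool.false_eq_true, if_true, if_false, Equiv.apply_symm_apply, Equiv.symm_apply_apply]⟩

/-- the face permutation on darts -/
def facePerm (D : ChordDiagram n) : Equiv.Perm (Fin (2 * n) × Bool) :=
  (D.arcPerm).trans D.vertexPerm

/-- the number of faces: the number of orbits of the face permutation -/
noncomputable def faceCount (D : ChordDiagram n) : ℕ :=
  Nat.card (MulAction.orbitRel.Quotient (Subgroup.zpowers D.facePerm) (Fin (2 * n) × Bool))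

/-- the chord diagram arises from a classical (planar) knot diagram: the carrier
surface has Euler characteristic `V - E + F = n - 2n + faceCount = 2` -/
def PlanarRealizable (D : ChordDiagram n) : Prop := D.faceCount = n + 2

end ChordDiagram


open ChordDiagram

/-! Figure 11 is evaluated outright: all four chords are odd, their signs `-1, 1, 1, -1`
cancel in `J(K)`, and their values `N(c) = 2, 4, 0, 2` give `f_K(t) = t⁴ - 2t² + 1`.
As `f_K` is an invariant whose degree bounds the chord count of every diagram of `K`
from below, a diagram with `Deg f_K` chords attains the real crossing number. -/

namespace ChordDiagram

variable {n : ℕ}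

theorem ext {D₁ D₂ : ChordDiagram n} (hep : D₁.ep = D₂.ep) (hsign : D₁.sign = D₂.sign) :
    D₁ = D₂ := by
  cases D₁; cases D₂; cases hep; cases hsign; rfl

theorem owp_eq_sum_of_forall_oddChord (D : ChordDiagram n) (hodd : ∀ i, D.OddChord i) :
    D.owp = ∑ i, C (D.sign i) * T (D.chordVal i) := by
  rw [owp, filter_true_of_mem fun i _ => hodd i]

theorem sInf_size_eq_of_owpDeg_eq {P : ∀ {m : ℕ}, ChordDiagram m → Prop}
    (hinv : ∀ {m₁ m₂ : ℕ} (D₁ : ChordDiagram m₁) (D₂ : ChordDiagram m₂),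
      P D₁ → P D₂ → D₁.owp = D₂.owp)
    (hbound : ∀ {m : ℕ} (Dm : ChordDiagram m), P Dm → owpDeg Dm.owp ≤ m)
    {D : ChordDiagram n} (hD : P D) (hdeg : owpDeg D.owp = n) :
    sInf {m : ℕ | ∃ Dm : ChordDiagram m, P Dm} = n := by
  refine le_antisymm (Nat.sInf_le ⟨D, hD⟩) (le_csInf ⟨n, D, hD⟩ ?_)
  rintro m ⟨Dm, hDm⟩
  calc n = owpDeg Dm.owp := by rw [← hinv D Dm hD hDm, hdeg]
    _ ≤ m := hbound Dm hDm

theorem owpDeg_T_four_sub_two_mul_T_two_add_one :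
    owpDeg (T 4 - C 2 * T 2 + 1) = 4 := by
  have hsupp : (T 4 - C 2 * T 2 + 1 : ℤ[T;T⁻¹]).coeff.support = {0, 2, 4} := by
    ext k
    simp only [Finsupp.mem_support_iff, AddMonoidAlgebra.coeff_add, AddMonoidAlgebra.coeff_sub,
      Finsupp.add_apply, Finsupp.sub_apply, ← T_zero, ← single_eq_C_mul_T, T_apply,
      AddMonoidAlgebra.coeff_single, Finsupp.single_apply]
    grind
  rw [owpDeg, hsupp]
  rfl

def figure11 : ChordDiagram 4 where
  ep := ⟨fun p => if p.2 then (![0, 1, 3, 6] : Fin 4 → Fin (2 * 4)) p.1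
      else (![2, 5, 7, 4] : Fin 4 → Fin (2 * 4)) p.1,
    ![(0, true), (1, true), (0, false), (2, true), (3, false), (1, false), (3, true), (2, false)],
    by decide, by decide⟩
  sign := ![-1, 1, 1, -1]
  sign_unit := by decide

theorem figure11_oddChord : ∀ i, figure11.OddChord i := by decide

theorem figure11_oddWrithe : figure11.oddWrithe = 0 := by decide

theorem figure11_chordVal : figure11.chordVal = ![2, 4, 0, 2] := by decide

theorem figure11_owp : figure11.owp = T 4 - C 2 * T 2 + 1 := by
  rw [owp_eq_sum_of_forall_oddChord _ figure11_oddChord, Fin.sum_univ_four, figure11_chordVal]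
  simp only [figure11, Matrix.cons_val, map_neg, map_one, map_ofNat, T_zero]
  ring

end ChordDiagram

/-- the 4-chord Gauss diagram of Example 4.3 (Figure 11): all four
chords are odd, the odd writhe is `0`, the odd writhe polynomial is
`t⁴ - 2t² + 1` with degree `4`; hence (modelling the virtual knot abstractly by its
diagrams, with invariance and the degree bound) the real crossing number of the
corresponding virtual knot is exactly `4`, even though `|J(K)| = 0`. -/
theorem stmt_19 (D : ChordDiagram 4)
    (hep : ∀ p : Fin 4 × Bool, D.ep p =
      if p.2 then (![0, 1, 3, 6] : Fin 4 → Fin (2 * 4)) p.1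
      else (![2, 5, 7, 4] : Fin 4 → Fin (2 * 4)) p.1)
    (hsign : ∀ i, D.sign i = (![-1, 1, 1, -1] : Fin 4 → ℤ) i)
    (VirtualKnot : Type)
    (IsDiagram : ∀ {m : ℕ}, ChordDiagram m → VirtualKnot → Prop)
    (hinv : ∀ {m₁ m₂ : ℕ} (D₁ : ChordDiagram m₁) (D₂ : ChordDiagram m₂) (K : VirtualKnot),
      IsDiagram D₁ K → IsDiagram D₂ K → D₁.owp = D₂.owp)
    (hbound : ∀ {m : ℕ} (Dm : ChordDiagram m) (K : VirtualKnot),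
      IsDiagram Dm K → owpDeg Dm.owp ≤ m)
    (K : VirtualKnot) (hD : IsDiagram D K) :
    (∀ i, D.OddChord i) ∧ D.oddWrithe = 0 ∧
    D.owp = T 4 - C 2 * T 2 + 1 ∧ owpDeg D.owp = 4 ∧
    sInf {m : ℕ | ∃ Dm : ChordDiagram m, IsDiagram Dm K} = 4 := by
  obtain rfl : D = figure11 := ChordDiagram.ext (Equiv.ext hep) (funext hsign)
  have hdeg : owpDeg figure11.owp = 4 :=
    figure11_owp ▸ owpDeg_T_four_sub_two_mul_T_two_add_one
  exact ⟨figure11_oddChord, figure11_oddWrithe, figure11_owp, hdeg,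
    sInf_size_eq_of_owpDeg_eq (P := fun Dm => IsDiagram Dm K) (fun D₁ D₂ => hinv D₁ D₂ K)
      (fun Dm => hbound Dm K) hD hdeg⟩
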